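/- arXiv:0801.0081 — 2 statements merged into one kernel-verified Lean document; each statement's English description precedes it below -/
import Mathlib

section
/- Under the change of variables r ↦ g r gᵀ with g ∈ GL(m,ℝ), the Lebesgue measure on the space of m×m real symmetric matrices transforms by the factor |det g|^{m+1}; equivalently, for integrable f on S_m, ∫_{S_m} f(g s gᵀ) ds = |det g|^{-(m+1)} ∫_{S_m} f(s) ds. -/
/-!
In the coordinates `(s_ij)_{i ≤ j}` of `S_m`, the map `s ↦ g s gᵀ` is a linear map `T_g`, and
`g ↦ T_g` is multiplicative, so the change of variables formula for linear maps reduces the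
theorem to `det T_g = (det g)^(m+1)`. Both sides are multiplicative in `g`, hence it suffices to
compare them on diagonal matrices and transvections, which generate `GL(m, ℝ)`. Every
multiplicative function of matrices to a commutative monoid is `1` on a transvection `t(c)`,
since `t(c)² = t(2c)` is conjugate to `t(c)`. For `g = diag(d)`, `T_g` multiplies `s_ij` by
`d_i d_j`, and each `d_i` occurs `m + 1` times in `∏_{i ≤ j} d_i d_j`.
-/

open Matrix MeasureTheory

/-- Index set of the entries `s_{ij}`, `i ≤ j`, of an `m × m` symmetric matrix;
the space `S_m ≅ ℝ^{m(m+1)/2}` with measure `ds = ∏_{i ≤ j} ds_{ij}` is realized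
as `SymIdx m → ℝ` with Lebesgue (product) measure. -/
def SymIdx (m : ℕ) := {p : Fin m × Fin m // p.1 ≤ p.2}

instance (m : ℕ) : Fintype (SymIdx m) := by unfold SymIdx; infer_instance

/-- The symmetric matrix with entries given by coordinates `x = (x_{ij})_{i ≤ j}`. -/
def symMat {m : ℕ} (x : SymIdx m → ℝ) : Matrix (Fin m) (Fin m) ℝ :=
  fun i j => if h : i ≤ j then x ⟨(i, j), h⟩ else x ⟨(j, i), (le_total i j).resolve_left h⟩

namespace MeasureTheory

variable {E F : Type*} [NormedAddCommGroup E] [NormedSpace ℝ E] [MeasurableSpace E]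
  [BorelSpace E] [FiniteDimensional ℝ E] (μ : Measure E) [μ.IsAddHaarMeasure]
  [NormedAddCommGroup F] [NormedSpace ℝ F]

theorem integral_comp_linearMap_of_det_ne_zero {f : E →ₗ[ℝ] E} (hf : LinearMap.det f ≠ 0)
    (φ : E → F) : ∫ x, φ (f x) ∂μ = |LinearMap.det f|⁻¹ • ∫ x, φ x ∂μ := by
  let e := (f.equivOfDetNeZero hf).toContinuousLinearEquiv.toHomeomorph.toMeasurableEquiv
  have he : ⇑e = f := rfl
  rw [← he, ← e.measurableEmbedding.integral_map, he,
    Measure.map_linearMap_addHaar_eq_smul_addHaar μ hf, integral_smul_measure,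
    ENNReal.toReal_ofReal (abs_nonneg _), abs_inv]

end MeasureTheory

namespace Matrix

variable {l n R K M : Type*} [Fintype n]

theorem IsSymm.mul_mul_transpose [NonUnitalCommSemiring R] {s : Matrix n n R} (hs : s.IsSymm)
    (g : Matrix l n R) : (g * s * gᵀ).IsSymm := by
  simp [IsSymm, transpose_mul, hs.eq, Matrix.mul_assoc]

variable [DecidableEq n]

theorem diagonal_update_mul_transvection [CommRing R] {i j : n} (hij : i ≠ j) (c : R) :
    diagonal (Function.update 1 i 2) * transvection i j c
      = transvection i j (2 * c) * diagonal (Function.update 1 i 2) := by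
  ext u v
  simp only [transvection, diagonal_mul, mul_diagonal, add_apply, one_apply, single_apply,
    Function.update_apply, Pi.one_apply]
  by_cases hu : u = i <;> by_cases hv : v = j <;> by_cases huv : u = v <;> subst_vars <;>
    simp_all [hij.symm, Ne.symm]

variable [Field K] [NeZero (2 : K)] [CommMonoid M]

theorem TransvectionStruct.map_toMatrix_eq_one (φ : Matrix n n K →* M)
    (t : TransvectionStruct n K) : φ t.toMatrix = 1 := by
  obtain ⟨i, j, hij, c⟩ := t
  set D : Matrix n n K := diagonal (Function.update 1 i 2)
  have hD : IsUnit (φ D) := by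
    refine ((isUnit_iff_isUnit_det D).2 ?_).map φ
    simp [D, det_diagonal, Finset.prod_update_of_mem, two_ne_zero]
  have ht : IsUnit (φ (transvection i j c)) :=
    ((isUnit_iff_isUnit_det _).2 (by simp [det_transvection_of_ne _ _ hij])).map φ
  have hsq : φ (transvection i j (2 * c)) = φ (transvection i j c) * φ (transvection i j c) := by
    rw [← map_mul, transvection_mul_transvection_same i j hij c c, two_mul]
  have hconj : φ D * φ (transvection i j c) = φ D * φ (transvection i j (2 * c)) := by
    rw [← map_mul, diagonal_update_mul_transvection hij, map_mul, mul_comm]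
  have hidem : φ (transvection i j c) = φ (transvection i j c) * φ (transvection i j c) :=
    hsq ▸ hD.mul_left_cancel hconj
  exact (ht.mul_left_cancel ((mul_one _).trans hidem)).symm

theorem monoidHom_apply_eq_of_forall_diagonal {φ ψ : Matrix n n K →* M}
    (h : ∀ D : n → K, (diagonal D).det ≠ 0 → φ (diagonal D) = ψ (diagonal D))
    {g : Matrix n n K} (hg : g.det ≠ 0) : φ g = ψ g :=
  diagonal_transvection_induction_of_det_ne_zero (fun A => φ A = ψ A) g hg h
    (fun t => by rw [t.map_toMatrix_eq_one, t.map_toMatrix_eq_one])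
    (fun A B _ _ hA hB => by rw [map_mul, map_mul, hA, hB])

end Matrix

section SymmetricCoordinates

variable {m : ℕ}

instance : DecidableEq (SymIdx m) :=
  inferInstanceAs (DecidableEq {p : Fin m × Fin m // p.1 ≤ p.2})

def symCoords (s : Matrix (Fin m) (Fin m) ℝ) : SymIdx m → ℝ := fun p => s p.1.1 p.1.2

@[simp]
theorem symMat_apply_val (x : SymIdx m → ℝ) (p : SymIdx m) : symMat x p.1.1 p.1.2 = x p := by
  simp only [symMat, dif_pos p.2]
  rfl

@[simp]
theorem symCoords_symMat (x : SymIdx m → ℝ) : symCoords (symMat x) = x :=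
  funext (symMat_apply_val x)

theorem symMat_isSymm (x : SymIdx m → ℝ) : (symMat x).IsSymm := by
  refine IsSymm.ext fun i j => ?_
  rcases lt_trichotomy i j with h | rfl | h
  · simp [symMat, h.le, not_le.2 h]
  · rfl
  · simp [symMat, h.le, not_le.2 h]

theorem symMat_symCoords {s : Matrix (Fin m) (Fin m) ℝ} (hs : s.IsSymm) :
    symMat (symCoords s) = s := by
  ext i j
  by_cases h : i ≤ j
  · simp [symMat, symCoords, h]
  · simp [symMat, symCoords, h, hs.apply]

theorem symMat_add (x y : SymIdx m → ℝ) : symMat (x + y) = symMat x + symMat y := by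
  ext i j
  simp only [symMat, Matrix.add_apply]
  split <;> rfl

theorem symMat_smul (c : ℝ) (x : SymIdx m → ℝ) : symMat (c • x) = c • symMat x := by
  ext i j
  simp only [symMat, Matrix.smul_apply]
  split <;> rfl

noncomputable def symCongr : Matrix (Fin m) (Fin m) ℝ →* Module.End ℝ (SymIdx m → ℝ) where
  toFun g :=
    { toFun x := symCoords (g * symMat x * gᵀ)
      map_add' x y := by
        funext p
        simp [symCoords, symMat_add, Matrix.mul_add, Matrix.add_mul]
      map_smul' c x := by
        funext p
        simp [symCoords, symMat_smul] }
  map_one' := LinearMap.ext fun x => by simp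
  map_mul' g h := LinearMap.ext fun x => by
    change symCoords (g * h * symMat x * (g * h)ᵀ)
      = symCoords (g * symMat (symCoords (h * symMat x * hᵀ)) * gᵀ)
    rw [symMat_symCoords ((symMat_isSymm x).mul_mul_transpose h), transpose_mul]
    simp only [Matrix.mul_assoc]

theorem symMat_symCongr (g : Matrix (Fin m) (Fin m) ℝ) (x : SymIdx m → ℝ) :
    symMat (symCongr g x) = g * symMat x * gᵀ :=
  symMat_symCoords ((symMat_isSymm x).mul_mul_transpose g)

theorem symCongr_diagonal (D : Fin m → ℝ) :
    symCongr (diagonal D) = toLin' (diagonal fun p : SymIdx m => D p.1.1 * D p.1.2) := by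
  refine LinearMap.ext fun x => funext fun p => ?_
  change (diagonal D * symMat x * (diagonal D)ᵀ) p.1.1 p.1.2 = (diagonal _ *ᵥ x) p
  rw [diagonal_transpose, mul_diagonal, diagonal_mul, symMat_apply_val, mulVec_diagonal]
  ring

open Finset in
theorem prod_symIdx_mul {R : Type*} [CommMonoid R] (D : Fin m → R) :
    ∏ p : SymIdx m, D p.1.1 * D p.1.2 = (∏ i, D i) ^ (m + 1) := by
  set U := univ.filter fun q : Fin m × Fin m => q.1 ≤ q.2
  set L := univ.filter fun q : Fin m × Fin m => q.2 ≤ q.1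
  have hU : ∏ p : SymIdx m, D p.1.1 * D p.1.2 = ∏ q ∈ U, D q.1 * D q.2 :=
    (prod_subtype U (by simp [U]) fun q => D q.1 * D q.2).symm
  have hswap : ∏ q ∈ U, D q.2 = ∏ q ∈ L, D q.1 :=
    prod_equiv (Equiv.prodComm _ _) (by simp [U, L]) (by simp)
  have hunion : U ∪ L = univ := by
    ext q
    simp [U, L, le_total]
  have hinter : ∏ q ∈ U ∩ L, D q.1 = ∏ i, D i :=
    prod_nbij' Prod.fst (fun i => (i, i)) (by simp) (by simp [U, L])
      (fun q hq => by
        obtain ⟨h₁, h₂⟩ : q.1 ≤ q.2 ∧ q.2 ≤ q.1 := by simpa [U, L] using hq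
        exact Prod.ext rfl (le_antisymm h₁ h₂))
      (by simp) (by simp)
  calc ∏ p : SymIdx m, D p.1.1 * D p.1.2
      = (∏ q ∈ U, D q.1) * ∏ q ∈ L, D q.1 := by rw [hU, prod_mul_distrib, hswap]
    _ = (∏ q ∈ U ∪ L, D q.1) * ∏ q ∈ U ∩ L, D q.1 := prod_union_inter.symm
    _ = (∏ i, D i) ^ (m + 1) := by
      rw [hunion, hinter, Fintype.prod_prod_type]
      simp only [prod_const, card_univ, Fintype.card_fin, prod_pow, pow_succ]

theorem det_symCongr_diagonal (D : Fin m → ℝ) :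
    LinearMap.det (symCongr (diagonal D)) = (diagonal D).det ^ (m + 1) := by
  rw [symCongr_diagonal, LinearMap.det_toLin', det_diagonal, det_diagonal, prod_symIdx_mul]

theorem det_symCongr {g : Matrix (Fin m) (Fin m) ℝ} (hg : g.det ≠ 0) :
    LinearMap.det (symCongr g) = g.det ^ (m + 1) :=
  monoidHom_apply_eq_of_forall_diagonal (φ := LinearMap.det.comp symCongr)
    (ψ := (powMonoidHom (m + 1)).comp detMonoidHom) (fun D _ => det_symCongr_diagonal D) hg

end SymmetricCoordinates

theorem symmetric_lebesgue_change_of_variables_general (m : ℕ)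
    (g : Matrix (Fin m) (Fin m) ℝ) (hg : IsUnit g.det)
    (f : Matrix (Fin m) (Fin m) ℝ → ℝ) :
    ∫ x : SymIdx m → ℝ, f (g * symMat x * gᵀ)
    = |g.det| ^ (-((m : ℝ) + 1)) * ∫ x : SymIdx m → ℝ, f (symMat x) := by
  have hdet : LinearMap.det (symCongr g) = g.det ^ (m + 1) := det_symCongr hg.ne_zero
  calc ∫ x : SymIdx m → ℝ, f (g * symMat x * gᵀ)
      = ∫ x : SymIdx m → ℝ, f (symMat (symCongr g x)) := by simp only [symMat_symCongr]
    _ = |LinearMap.det (symCongr g)|⁻¹ • ∫ x : SymIdx m → ℝ, f (symMat x) :=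
      integral_comp_linearMap_of_det_ne_zero volume (hdet ▸ pow_ne_zero _ hg.ne_zero) (f ∘ symMat)
    _ = |g.det| ^ (-((m : ℝ) + 1)) * ∫ x : SymIdx m → ℝ, f (symMat x) := by
      rw [hdet, smul_eq_mul, abs_pow, Real.rpow_neg (abs_nonneg _), ← Real.rpow_natCast,
        Nat.cast_add_one]

/-- Under the change of variables `s ↦ g s gᵀ`, `g ∈ GL(m,ℝ)`, the Lebesgue measure
on the space `S_m` of `m × m` real symmetric matrices transforms by the factor
`|det g|^{m+1}`: for integrable `f` on `S_m`,
`∫_{S_m} f(g s gᵀ) ds = |det g|^{-(m+1)} ∫_{S_m} f(s) ds`. -/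
theorem symmetric_lebesgue_change_of_variables (m : ℕ) (hm : 1 ≤ m)
    (g : Matrix (Fin m) (Fin m) ℝ) (hg : IsUnit g.det)
    (f : Matrix (Fin m) (Fin m) ℝ → ℝ)
    (hf : Integrable (fun x : SymIdx m → ℝ => f (symMat x))) :
    ∫ x : SymIdx m → ℝ, f (g * symMat x * gᵀ)
    = |g.det| ^ (-((m : ℝ) + 1)) * ∫ x : SymIdx m → ℝ, f (symMat x) :=
  symmetric_lebesgue_change_of_variables_general m g hg f
end

section
/- If p₁, p₂ ∈ P_m and s = p₁ + p₂, r = s^{-1/2} p₁ s^{-1/2}, then s ∈ P_m, r ∈ P_m, I_m - r ∈ P_m, and p₁ = s^{1/2} r s^{1/2}, p₂ = s^{1/2}(I_m - r)s^{1/2}; conversely, for any s ∈ P_m and r with 0 < r < I_m, the matrices p₁ = s^{1/2} r s^{1/2} and p₂ = s^{1/2}(I_m - r)s^{1/2} are both positive definite and sum to s. Thus (p₁,p₂) ↦ (s,r) is a bijection from P_m × P_m to P_m × (0,I_m). -/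
/-
`psqrt s` agrees with the continuous functional calculus square root `CFC.sqrt s`, so for
`s` positive definite it is a positive definite, hence self-adjoint and invertible, square
root of `s`. Congruence `A ↦ U * A * U` by a self-adjoint unit `U` preserves positive
definiteness, which gives all the positivity claims with `U = s^{±1/2}`. Since
`s^{-1/2} (p₁ + p₂) s^{-1/2} = I`, the matrix `I - r` is the congruence of `p₂`, and the
congruences by `s^{1/2}` and `s^{-1/2}` undo each other, so the two maps are mutually inverse.
-/

open Matrix

/- The positive semi-definite square root of a positive semi-definite matrix
(junk value `0` otherwise). -/
open Classical in
noncomputable def psqrt {m : ℕ} (r : Matrix (Fin m) (Fin m) ℝ) : Matrix (Fin m) (Fin m) ℝ :=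
  if h : r.PosSemidef then
    h.1.eigenvectorUnitary.1 * diagonal ((↑) ∘ (√·) ∘ h.1.eigenvalues) *
      (star h.1.eigenvectorUnitary : Matrix (Fin m) (Fin m) ℝ) else 0

namespace Matrix

theorem PosDef.conjugate_of_isSelfAdjoint {n R : Type*} [Fintype n] [DecidableEq n] [Ring R]
    [PartialOrder R] [StarRing R] {A U : Matrix n n R} (hA : A.PosDef) (hU : IsUnit U)
    (hU' : IsSelfAdjoint U) : (U * A * U).PosDef := by
  simpa only [hU'.star_eq] using hU.posDef_star_left_conjugate_iff.2 hA

section Sandwich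

variable {n α : Type*} [Fintype n] [DecidableEq n] [CommRing α] {q : Matrix n n α}

theorem mul_nonsing_inv_sandwich_mul (hq : IsUnit q.det) (p : Matrix n n α) :
    q * (q⁻¹ * p * q⁻¹) * q = p := by
  simp only [mul_assoc, nonsing_inv_mul _ hq, mul_one, mul_nonsing_inv_cancel_left _ _ hq]

theorem nonsing_inv_mul_sandwich_mul_nonsing_inv (hq : IsUnit q.det) (p : Matrix n n α) :
    q⁻¹ * (q * p * q) * q⁻¹ = p := by
  simp only [mul_assoc, mul_nonsing_inv _ hq, mul_one, nonsing_inv_mul_cancel_left _ _ hq]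

end Sandwich

end Matrix

section psqrt

open scoped MatrixOrder Matrix.Norms.L2Operator

variable {m : ℕ} {s : Matrix (Fin m) (Fin m) ℝ}

theorem psqrt_eq_sqrt (hs : s.PosSemidef) : psqrt s = CFC.sqrt s := by
  rw [psqrt, dif_pos hs, CFC.sqrt_eq_real_sqrt s hs.nonneg, cfcₙ_eq_cfc, hs.1.cfc_eq]
  rfl

theorem psqrt_mul_self (hs : s.PosSemidef) : psqrt s * psqrt s = s := by
  rw [psqrt_eq_sqrt hs, CFC.sqrt_mul_sqrt_self s hs.nonneg]

theorem posDef_psqrt (hs : s.PosDef) : (psqrt s).PosDef := by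
  have := hs.isStrictlyPositive
  rw [psqrt_eq_sqrt hs.posSemidef]
  exact (IsStrictlyPositive.sqrt s).posDef

theorem isUnit_det_psqrt (hs : s.PosDef) : IsUnit (psqrt s).det :=
  (isUnit_iff_isUnit_det _).1 (posDef_psqrt hs).isUnit

theorem posDef_psqrt_conjugate {r : Matrix (Fin m) (Fin m) ℝ} (hs : s.PosDef)
    (hr : r.PosDef) : (psqrt s * r * psqrt s).PosDef :=
  hr.conjugate_of_isSelfAdjoint (posDef_psqrt hs).isUnit (posDef_psqrt hs).isHermitian

theorem posDef_inv_psqrt_conjugate {p : Matrix (Fin m) (Fin m) ℝ} (hs : s.PosDef)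
    (hp : p.PosDef) : ((psqrt s)⁻¹ * p * (psqrt s)⁻¹).PosDef :=
  hp.conjugate_of_isSelfAdjoint (posDef_psqrt hs).inv.isUnit (posDef_psqrt hs).inv.isHermitian

end psqrt

section BetaCoordinates

variable {m : ℕ} {p₁ p₂ s r : Matrix (Fin m) (Fin m) ℝ}

theorem one_sub_inv_psqrt_conjugate (hs : (p₁ + p₂).PosDef) :
    1 - (psqrt (p₁ + p₂))⁻¹ * p₁ * (psqrt (p₁ + p₂))⁻¹ =
      (psqrt (p₁ + p₂))⁻¹ * p₂ * (psqrt (p₁ + p₂))⁻¹ := by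
  have hone : (psqrt (p₁ + p₂))⁻¹ * (p₁ + p₂) * (psqrt (p₁ + p₂))⁻¹ = 1 := by
    simpa only [mul_one, psqrt_mul_self hs.posSemidef] using
      nonsing_inv_mul_sandwich_mul_nonsing_inv (isUnit_det_psqrt hs) 1
  rw [← hone, mul_add, add_mul, add_sub_cancel_left]

theorem psqrt_conjugate_add_one_sub (hs : s.PosDef) :
    psqrt s * r * psqrt s + psqrt s * (1 - r) * psqrt s = s := by
  rw [← add_mul, ← mul_add, add_sub_cancel, mul_one, psqrt_mul_self hs.posSemidef]

theorem posDef_sum_and_ratio (h₁ : p₁.PosDef) (h₂ : p₂.PosDef) :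
    (p₁ + p₂).PosDef ∧
      ((psqrt (p₁ + p₂))⁻¹ * p₁ * (psqrt (p₁ + p₂))⁻¹).PosDef ∧
      (1 - (psqrt (p₁ + p₂))⁻¹ * p₁ * (psqrt (p₁ + p₂))⁻¹).PosDef ∧
      p₁ = psqrt (p₁ + p₂) * ((psqrt (p₁ + p₂))⁻¹ * p₁ * (psqrt (p₁ + p₂))⁻¹) *
        psqrt (p₁ + p₂) ∧
      p₂ = psqrt (p₁ + p₂) *
        (1 - (psqrt (p₁ + p₂))⁻¹ * p₁ * (psqrt (p₁ + p₂))⁻¹) * psqrt (p₁ + p₂) := by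
  have hs := h₁.add h₂
  have hq := isUnit_det_psqrt hs
  rw [one_sub_inv_psqrt_conjugate hs]
  exact ⟨hs, posDef_inv_psqrt_conjugate hs h₁, posDef_inv_psqrt_conjugate hs h₂,
    (mul_nonsing_inv_sandwich_mul hq p₁).symm, (mul_nonsing_inv_sandwich_mul hq p₂).symm⟩

theorem posDef_conjugates_of_ratio (hs : s.PosDef) (hr : r.PosDef) (hr' : (1 - r).PosDef) :
    (psqrt s * r * psqrt s).PosDef ∧ (psqrt s * (1 - r) * psqrt s).PosDef ∧
      psqrt s * r * psqrt s + psqrt s * (1 - r) * psqrt s = s :=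
  ⟨posDef_psqrt_conjugate hs hr, posDef_psqrt_conjugate hs hr', psqrt_conjugate_add_one_sub hs⟩

end BetaCoordinates

theorem posdef_sum_beta_bijection_general (m : ℕ) :
    (∀ p₁ p₂ : Matrix (Fin m) (Fin m) ℝ, p₁.PosDef → p₂.PosDef →
      (p₁ + p₂).PosDef ∧
      ((psqrt (p₁ + p₂))⁻¹ * p₁ * (psqrt (p₁ + p₂))⁻¹).PosDef ∧
      (1 - (psqrt (p₁ + p₂))⁻¹ * p₁ * (psqrt (p₁ + p₂))⁻¹).PosDef ∧
      p₁ = psqrt (p₁ + p₂) * ((psqrt (p₁ + p₂))⁻¹ * p₁ * (psqrt (p₁ + p₂))⁻¹) *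
            psqrt (p₁ + p₂) ∧
      p₂ = psqrt (p₁ + p₂) *
            (1 - (psqrt (p₁ + p₂))⁻¹ * p₁ * (psqrt (p₁ + p₂))⁻¹) * psqrt (p₁ + p₂)) ∧
    (∀ s r : Matrix (Fin m) (Fin m) ℝ, s.PosDef → r.PosDef → (1 - r).PosDef →
      (psqrt s * r * psqrt s).PosDef ∧
      (psqrt s * (1 - r) * psqrt s).PosDef ∧
      psqrt s * r * psqrt s + psqrt s * (1 - r) * psqrt s = s) ∧
    Set.BijOn
      (fun pq : Matrix (Fin m) (Fin m) ℝ × Matrix (Fin m) (Fin m) ℝ =>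
        (pq.1 + pq.2, (psqrt (pq.1 + pq.2))⁻¹ * pq.1 * (psqrt (pq.1 + pq.2))⁻¹))
      ({p | p.PosDef} ×ˢ {p | p.PosDef})
      ({p | p.PosDef} ×ˢ {r | r.PosDef ∧ (1 - r).PosDef}) := by
  refine ⟨fun _ _ => posDef_sum_and_ratio, fun _ _ => posDef_conjugates_of_ratio, ?_⟩
  refine Set.InvOn.bijOn
    (f' := fun sr => (psqrt sr.1 * sr.2 * psqrt sr.1, psqrt sr.1 * (1 - sr.2) * psqrt sr.1))
    ⟨?leftInv, ?rightInv⟩ ?mapsTo ?mapsTo_inv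
  case leftInv =>
    rintro ⟨p₁, p₂⟩ ⟨h₁, h₂⟩
    obtain ⟨-, -, -, hp₁, hp₂⟩ := posDef_sum_and_ratio h₁ h₂
    exact Prod.ext hp₁.symm hp₂.symm
  case rightInv =>
    rintro ⟨s, r⟩ ⟨hs, -, -⟩
    dsimp only
    rw [psqrt_conjugate_add_one_sub hs,
      nonsing_inv_mul_sandwich_mul_nonsing_inv (isUnit_det_psqrt hs)]
  case mapsTo =>
    rintro ⟨p₁, p₂⟩ ⟨h₁, h₂⟩
    obtain ⟨hs, hr, hr', -, -⟩ := posDef_sum_and_ratio h₁ h₂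
    exact ⟨hs, hr, hr'⟩
  case mapsTo_inv =>
    rintro ⟨s, r⟩ ⟨hs, hr, hr'⟩
    obtain ⟨hp₁, hp₂, -⟩ := posDef_conjugates_of_ratio hs hr hr'
    exact ⟨hp₁, hp₂⟩

/-- If `p₁, p₂ ∈ P_m` and `s = p₁ + p₂`, `r = s^{-1/2} p₁ s^{-1/2}`, then `s ∈ P_m`,
`r ∈ P_m`, `I_m - r ∈ P_m`, and `p₁ = s^{1/2} r s^{1/2}`,
`p₂ = s^{1/2}(I_m - r)s^{1/2}`; conversely for `s ∈ P_m` and `0 < r < I_m`, the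
matrices `p₁ = s^{1/2} r s^{1/2}` and `p₂ = s^{1/2}(I_m - r)s^{1/2}` are positive
definite and sum to `s`.  Thus `(p₁,p₂) ↦ (s,r)` is a bijection from `P_m × P_m`
onto `P_m × (0, I_m)`. -/
theorem posdef_sum_beta_bijection (m : ℕ) (hm : 1 ≤ m) :
    (∀ p₁ p₂ : Matrix (Fin m) (Fin m) ℝ, p₁.PosDef → p₂.PosDef →
      (p₁ + p₂).PosDef ∧
      ((psqrt (p₁ + p₂))⁻¹ * p₁ * (psqrt (p₁ + p₂))⁻¹).PosDef ∧
      (1 - (psqrt (p₁ + p₂))⁻¹ * p₁ * (psqrt (p₁ + p₂))⁻¹).PosDef ∧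
      p₁ = psqrt (p₁ + p₂) * ((psqrt (p₁ + p₂))⁻¹ * p₁ * (psqrt (p₁ + p₂))⁻¹) *
            psqrt (p₁ + p₂) ∧
      p₂ = psqrt (p₁ + p₂) *
            (1 - (psqrt (p₁ + p₂))⁻¹ * p₁ * (psqrt (p₁ + p₂))⁻¹) * psqrt (p₁ + p₂)) ∧
    (∀ s r : Matrix (Fin m) (Fin m) ℝ, s.PosDef → r.PosDef → (1 - r).PosDef →
      (psqrt s * r * psqrt s).PosDef ∧
      (psqrt s * (1 - r) * psqrt s).PosDef ∧
      psqrt s * r * psqrt s + psqrt s * (1 - r) * psqrt s = s) ∧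
    Set.BijOn
      (fun pq : Matrix (Fin m) (Fin m) ℝ × Matrix (Fin m) (Fin m) ℝ =>
        (pq.1 + pq.2, (psqrt (pq.1 + pq.2))⁻¹ * pq.1 * (psqrt (pq.1 + pq.2))⁻¹))
      ({p | p.PosDef} ×ˢ {p | p.PosDef})
      ({p | p.PosDef} ×ˢ {r | r.PosDef ∧ (1 - r).PosDef}) :=
  posdef_sum_beta_bijection_general m
end
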